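/- arXiv:1809.01690 — 3 statements merged into one kernel-verified Lean document; each statement's English description precedes it below -/
import Mathlib

section
/- Let (Ω, μ) be a measure space, 1 ≤ p < ∞, and let f : ℝ → ℝ be continuously differentiable with |f′(s)| ≤ M for all s ∈ ℝ. Let u : Ω → ℝ be measurable and let w : Ω → ℝ satisfy ∫_Ω |w|^p dμ < ∞. Then (1/|t|) · ( ∫_Ω | f(u(x) + t w(x)) − f(u(x)) − t f′(u(x)) w(x) |^p dμ(x) )^{1/p} → 0 as t → 0 (t real, t ≠ 0). In other words, the Nemytskii map w ↦ f ∘ (u + w) is Gateaux differentiable at 0 in L^p(μ) with differential w ↦ (f′ ∘ u) · w. -/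
open Filter Topology MeasureTheory

/-- Gateaux differentiability of the Nemytskii operator: if `f : ℝ → ℝ` is `C¹` with
`|f′| ≤ M`, `u` is measurable and `∫ |w|^p dμ < ∞` (`1 ≤ p < ∞`), then
`(1/|t|)·(∫ |f(u + t w) − f(u) − t f′(u) w|^p dμ)^{1/p} → 0` as `t → 0`, `t ≠ 0`. -/
theorem stmt10 {Ω : Type*} [MeasurableSpace Ω] (μ : Measure Ω)
    (p : ℝ) (hp : 1 ≤ p)
    (f : ℝ → ℝ) (hf : ContDiff ℝ 1 f)
    (M : ℝ) (hM : ∀ s : ℝ, |deriv f s| ≤ M)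
    (u : Ω → ℝ) (hu : Measurable u)
    (w : Ω → ℝ) (hw : Measurable w)
    (hwp : ∫⁻ x, ENNReal.ofReal (|w x| ^ p) ∂μ < ⊤) :
    Tendsto (fun t : ℝ =>
        (1 / |t|) *
          (∫ x, |f (u x + t * w x) - f (u x) - t * deriv f (u x) * w x| ^ p ∂μ) ^ (1 / p))
      (𝓝[≠] 0) (𝓝 0) := by
  have hp0 : (0:ℝ) < p := lt_of_lt_of_le one_pos hp
  have hp0' : p ≠ 0 := ne_of_gt hp0
  have hM0 : 0 ≤ M := le_trans (abs_nonneg _) (hM 0)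
  have hdf : Differentiable ℝ f := hf.differentiable one_ne_zero
  have hdfc : Continuous (deriv f) := hf.continuous_deriv le_rfl
  -- abbreviations
  set g : ℝ → Ω → ℝ := fun t x => f (u x + t * w x) - f (u x) - t * deriv f (u x) * w x with hg
  set φ : ℝ → Ω → ℝ := fun t x => (|t|⁻¹ * |g t x|) ^ p with hφ
  -- Lipschitz bound from MVT
  have lip : ∀ a b : ℝ, |f b - f a| ≤ M * |b - a| := by
    intro a b
    simpa [Real.norm_eq_abs] using
      convex_univ.norm_image_sub_le_of_norm_deriv_le (fun x _ => hdf x)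
        (fun x _ => by rw [Real.norm_eq_abs]; exact hM x) (Set.mem_univ a) (Set.mem_univ b)
  -- pointwise bound
  have hbound : ∀ t : ℝ, t ≠ 0 → ∀ x, |t|⁻¹ * |g t x| ≤ 2 * M * |w x| := by
    intro t ht x
    rw [inv_mul_le_iff₀ (abs_pos.mpr ht)]
    calc |g t x| ≤ |f (u x + t * w x) - f (u x)| + |t * deriv f (u x) * w x| :=
            abs_sub _ _
      _ ≤ M * |t * w x| + |t| * M * |w x| := by
            gcongr
            · simpa using lip (u x) (u x + t * w x)
            · calc |t * deriv f (u x) * w x| = |t| * |deriv f (u x)| * |w x| := by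
                    rw [abs_mul, abs_mul]
                _ ≤ |t| * M * |w x| := by gcongr; exact hM _
      _ = |t| * (2 * M * |w x|) := by rw [abs_mul]; ring
  -- pointwise convergence of φ
  have hconv : ∀ x, Tendsto (fun t => φ t x) (𝓝[≠] (0:ℝ)) (𝓝 0) := by
    intro x
    have h1 : HasDerivAt (fun t : ℝ => f (u x + t * w x)) (deriv f (u x) * w x) 0 := by
      have hinner : HasDerivAt (fun t : ℝ => u x + t * w x) (w x) 0 := by
        simpa using ((hasDerivAt_id (0:ℝ)).mul_const (w x)).const_add (u x)
      have := ((hdf (u x + 0 * w x)).hasDerivAt).comp 0 hinner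
      simpa [Function.comp_def] using this
    have h2 := hasDerivAt_iff_tendsto.mp h1
    have h3 : Tendsto (fun t : ℝ => |t|⁻¹ * |g t x|) (𝓝[≠] (0:ℝ)) (𝓝 0) := by
      refine (h2.mono_left nhdsWithin_le_nhds).congr fun t => ?_
      simp [hg, Real.norm_eq_abs, smul_eq_mul, mul_comm, mul_assoc, mul_left_comm, sub_sub]
    have := h3.rpow_const (Or.inr (le_of_lt hp0))
    simpa [Real.zero_rpow hp0'] using this
  -- integrability of dominating function
  have hwint : Integrable (fun x => |w x| ^ p) μ := by
    refine ⟨((Real.continuous_rpow_const hp0.le).measurable.comp hw.abs).aestronglyMeasurable, ?_⟩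
    rw [hasFiniteIntegral_iff_ofReal (Eventually.of_forall fun x => Real.rpow_nonneg (abs_nonneg _) p)]
    exact hwp
  have hGint : Integrable (fun x => (2 * M) ^ p * |w x| ^ p) μ := hwint.const_mul _
  -- measurability of g, φ
  have hmeas : ∀ t : ℝ, Measurable (φ t) := by
    intro t
    exact (Real.continuous_rpow_const hp0.le).measurable.comp
      (measurable_const.mul (((hf.continuous.measurable.comp (hu.add ((hw.const_mul t)))).sub
        (hf.continuous.measurable.comp hu)).sub
        (((hdfc.measurable.comp hu).const_mul t).mul hw)).abs)
  -- DCT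
  have hDCT : Tendsto (fun t => ∫ x, φ t x ∂μ) (𝓝[≠] (0:ℝ)) (𝓝 0) := by
    have := tendsto_integral_filter_of_dominated_convergence
      (μ := μ) (l := 𝓝[≠] (0:ℝ)) (F := φ) (f := fun _ => (0:ℝ))
      (bound := fun x => (2 * M) ^ p * |w x| ^ p)
      (Eventually.of_forall fun t => (hmeas t).aestronglyMeasurable)
      ?_ hGint (Eventually.of_forall hconv)
    · simpa using this
    · filter_upwards [self_mem_nhdsWithin] with t ht
      refine Eventually.of_forall fun x => ?_
      have h1 : |t|⁻¹ * |g t x| ≤ 2 * M * |w x| := hbound t ht x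
      have h2 : (0:ℝ) ≤ |t|⁻¹ * |g t x| := by positivity
      calc ‖φ t x‖ = (|t|⁻¹ * |g t x|) ^ p := by
              rw [Real.norm_eq_abs, abs_of_nonneg (Real.rpow_nonneg h2 p)]
        _ ≤ (2 * M * |w x|) ^ p := Real.rpow_le_rpow h2 h1 (le_of_lt hp0)
        _ = (2 * M) ^ p * |w x| ^ p := Real.mul_rpow (by positivity) (abs_nonneg _)
  -- conclude
  have hfin := hDCT.rpow_const (p := 1/p) (Or.inr (by positivity))
  rw [Real.zero_rpow (by positivity : (1:ℝ)/p ≠ 0)] at hfin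
  refine hfin.congr' ?_
  filter_upwards [self_mem_nhdsWithin] with t ht
  have ht0 : (0:ℝ) < |t| := abs_pos.mpr ht
  have key : ∀ x, φ t x = (|t|⁻¹) ^ p * |g t x| ^ p := fun x =>
    Real.mul_rpow (by positivity) (abs_nonneg _)
  rw [show (fun x => φ t x) = fun x => (|t|⁻¹) ^ p * |g t x| ^ p from funext key]
  rw [integral_const_mul]
  rw [Real.mul_rpow (Real.rpow_nonneg (by positivity) p)
    (integral_nonneg fun x => Real.rpow_nonneg (abs_nonneg _) p)]
  rw [one_div, Real.rpow_rpow_inv (by positivity) hp0']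
  rw [one_div]
end

section
/- Let Ω ⊆ ℝⁿ be open with finite Lebesgue measure, and let h be differentiable on Ω with Dh(x) invertible for every x ∈ Ω. Set b(x) = ((Dh(x))^{−1})ᵀ (an n×n matrix) and J(x) = det Dh(x), and assume J is differentiable on Ω with gradient ∇J. Suppose there are constants β, η, δ > 0 and c > 0 such that for all x ∈ Ω and all indices i, j: |b_{ij}(x)| ≤ β, |b_{ij}(x) − δ_{ij}| ≤ η, |∂J/∂x_j (x)| ≤ δ, and J(x) ≥ c. Let 1 < p, q < ∞ with 1/p + 1/q = 1, and let u, ψ : Ω → ℝ be differentiable with ∫_Ω (|u|^p + |∇u|_p^p) dx < ∞ and ∫_Ω (|ψ|^q + |∇ψ|_q^q) dx < ∞, where |v|_r denotes the r-norm of a vector in ℝⁿ. Then | ∫_Ω [ ⟨b(x)∇u(x), b(x)∇ψ(x)⟩ − ⟨∇u(x), ∇ψ(x)⟩ ] dx + ∫_Ω (1/J(x)) ⟨b(x)∇u(x), b(x)∇J(x)⟩ ψ(x) dx | ≤ ( nη(1 + nβ) + n³β²δ/c ) · ( ∫_Ω (|u|^p + |∇u|_p^p) dx )^{1/p} · ( ∫_Ω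 (|ψ|^q + |∇ψ|_q^q) dx )^{1/q}. -/
open MeasureTheory Matrix
open scoped ENNReal NNReal

/-- The coordinate gradient vector `(∂f/∂x₁, …, ∂f/∂xₙ)` of `f : ℝⁿ → ℝ` at `x`. -/
noncomputable def gradVec (n : ℕ) (f : EuclideanSpace ℝ (Fin n) → ℝ)
    (x : EuclideanSpace ℝ (Fin n)) : Fin n → ℝ :=
  fun i => fderiv ℝ f x (EuclideanSpace.single i 1)

/-- The Jacobian matrix `(∂hᵢ/∂xⱼ)` of `h : ℝⁿ → ℝⁿ` at `x`. -/
noncomputable def jacMat (n : ℕ) (h : EuclideanSpace ℝ (Fin n) → EuclideanSpace ℝ (Fin n))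
    (x : EuclideanSpace ℝ (Fin n)) : Matrix (Fin n) (Fin n) ℝ :=
  Matrix.of fun i j => fderiv ℝ h x (EuclideanSpace.single j 1) i

/-- The `r`-norm `|v|_r = (∑ |vᵢ|^r)^{1/r}` of a vector `v ∈ ℝⁿ`. -/
noncomputable def pNormVec (n : ℕ) (r : ℝ) (v : Fin n → ℝ) : ℝ :=
  (∑ i, |v i| ^ r) ^ (1 / r)

/-! ### Auxiliary lemmas -/

instance matMeas (m n : Type*) (α : Type*) [MeasurableSpace α] :
    MeasurableSpace (Matrix m n α) := by unfold Matrix; infer_instance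

instance matBorel (m n : Type*) [Countable m] [Countable n] :
    BorelSpace (Matrix m n ℝ) :=
  ⟨(inferInstance : BorelSpace (m → n → ℝ)).measurable_eq⟩

lemma measurable_gradVec (n : ℕ) (f : EuclideanSpace ℝ (Fin n) → ℝ) (j : Fin n) :
    Measurable fun x => gradVec n f x j :=
  measurable_fderiv_apply_const ℝ f _

lemma measurable_jacMat (n : ℕ) (h : EuclideanSpace ℝ (Fin n) → EuclideanSpace ℝ (Fin n)) :
    Measurable fun x => jacMat n h x := by
  apply measurable_pi_lambda
  intro i
  apply measurable_pi_lambda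
  intro j
  exact ((EuclideanSpace.proj i : EuclideanSpace ℝ (Fin n) →L[ℝ] ℝ).continuous.measurable).comp
    (measurable_fderiv_apply_const ℝ h (EuclideanSpace.single j 1))

lemma measurable_binv (n : ℕ) (h : EuclideanSpace ℝ (Fin n) → EuclideanSpace ℝ (Fin n))
    (i j : Fin n) : Measurable fun x => ((jacMat n h x)⁻¹)ᵀ i j := by
  have hm := measurable_jacMat n h
  simp only [Matrix.transpose_apply, Matrix.inv_def, Matrix.smul_apply, smul_eq_mul]
  apply Measurable.mul
  · rw [Ring.inverse_eq_inv']
    exact measurable_inv.comp ((continuous_id.matrix_det.measurable).comp hm)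
  · exact (((continuous_apply i).comp ((continuous_apply j).comp
      continuous_id.matrix_adjugate)).measurable).comp hm

lemma measurable_detJ (n : ℕ) (h : EuclideanSpace ℝ (Fin n) → EuclideanSpace ℝ (Fin n)) :
    Measurable fun x => (jacMat n h x).det :=
  (continuous_id.matrix_det.measurable).comp (measurable_jacMat n h)

lemma pNormVec_nonneg (n : ℕ) (r : ℝ) (v : Fin n → ℝ) : 0 ≤ pNormVec n r v :=
  Real.rpow_nonneg (Finset.sum_nonneg fun _ _ => Real.rpow_nonneg (abs_nonneg _) _) _

lemma sum_abs_le_pNormVec {n : ℕ} {p q : ℝ} (hpq : Real.HolderConjugate p q)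
    (v : Fin n → ℝ) : ∑ j, |v j| ≤ pNormVec n p v * (n : ℝ) ^ (1 / q) := by
  have h := Real.inner_le_Lp_mul_Lq (Finset.univ) (fun j => |v j|) (fun _ => (1 : ℝ)) hpq
  simpa [pNormVec, abs_abs, Real.one_rpow] using h

lemma sum_mul_bound {n : ℕ} (M v : Fin n → ℝ) {β S : ℝ}
    (hM : ∀ j, |M j| ≤ β) (hS : ∑ j, |v j| ≤ S) (hβ : 0 ≤ β) :
    |∑ j, M j * v j| ≤ β * S :=
  calc |∑ j, M j * v j| ≤ ∑ j, |M j * v j| := Finset.abs_sum_le_sum_abs _ _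
    _ ≤ ∑ j, β * |v j| := Finset.sum_le_sum fun j _ => by
        rw [abs_mul]; exact mul_le_mul_of_nonneg_right (hM j) (abs_nonneg _)
    _ = β * ∑ j, |v j| := (Finset.mul_sum _ _ _).symm
    _ ≤ β * S := mul_le_mul_of_nonneg_left hS hβ

lemma mulVec_eq_sum {n : ℕ} (B : Matrix (Fin n) (Fin n) ℝ) (v : Fin n → ℝ) (i : Fin n) :
    B.mulVec v i = ∑ j, B i j * v j := by
  simp [Matrix.mulVec, dotProduct]

lemma mulVec_sub_self {n : ℕ} (B : Matrix (Fin n) (Fin n) ℝ) (v : Fin n → ℝ) (i : Fin n) :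
    B.mulVec v i - v i = ∑ j, (B i j - (if i = j then 1 else 0)) * v j := by
  rw [_root_.mulVec_eq_sum]
  simp [sub_mul, Finset.sum_sub_distrib, ite_mul]

/-- Pointwise bound for the first (gradient–gradient) term. -/
lemma pointwise_boundA {n : ℕ} (hn : 1 ≤ n) {p q : ℝ} (hpq : Real.HolderConjugate p q)
    (B : Matrix (Fin n) (Fin n) ℝ) (gu gψ : Fin n → ℝ)
    {β η : ℝ} (hβ : 0 ≤ β) (hη : 0 ≤ η)
    (hBβ : ∀ i j, |B i j| ≤ β) (hBη : ∀ i j, |B i j - (if i = j then 1 else 0)| ≤ η) :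
    |B.mulVec gu ⬝ᵥ B.mulVec gψ - gu ⬝ᵥ gψ|
      ≤ ((n : ℝ) * η * (1 + n * β)) * (pNormVec n p gu * pNormVec n q gψ) := by
  set N : ℝ := (n : ℝ) with hN
  have hN1 : (1 : ℝ) ≤ N := Nat.one_le_cast.mpr hn
  have hN0 : (0 : ℝ) < N := lt_of_lt_of_le zero_lt_one hN1
  set a := pNormVec n p gu with ha
  set s := pNormVec n q gψ with hs
  have ha0 : 0 ≤ a := pNormVec_nonneg n p gu
  have hs0 : 0 ≤ s := pNormVec_nonneg n q gψ
  set r1 : ℝ := N ^ (1 / p) with hr1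
  set r2 : ℝ := N ^ (1 / q) with hr2
  have hr10 : 0 ≤ r1 := Real.rpow_nonneg hN0.le _
  have hr20 : 0 ≤ r2 := Real.rpow_nonneg hN0.le _
  have hr12 : r1 * r2 = N := by
    rw [hr1, hr2, ← Real.rpow_add hN0]
    have : 1 / p + 1 / q = 1 := by
      simpa [one_div] using hpq.inv_add_inv_eq_one
    rw [this, Real.rpow_one]
  have hsumu : ∑ j, |gu j| ≤ a * r2 := sum_abs_le_pNormVec hpq gu
  have hsumψ : ∑ j, |gψ j| ≤ s * r1 := sum_abs_le_pNormVec hpq.symm gψ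
  have hBψ : ∀ i, |B.mulVec gψ i| ≤ β * (s * r1) := fun i => by
    rw [_root_.mulVec_eq_sum]; exact sum_mul_bound _ _ (fun j => hBβ i j) hsumψ hβ
  have hBuη : ∀ i, |B.mulVec gu i - gu i| ≤ η * (a * r2) := fun i => by
    rw [mulVec_sub_self]; exact sum_mul_bound _ _ (fun j => hBη i j) hsumu hη
  have hBψη : ∀ i, |B.mulVec gψ i - gψ i| ≤ η * (s * r1) := fun i => by
    rw [mulVec_sub_self]; exact sum_mul_bound _ _ (fun j => hBη i j) hsumψ hη
  have hAid : B.mulVec gu ⬝ᵥ B.mulVec gψ - gu ⬝ᵥ gψ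
      = ∑ i, ((B.mulVec gu i - gu i) * B.mulVec gψ i + gu i * (B.mulVec gψ i - gψ i)) := by
    simp only [dotProduct, ← Finset.sum_sub_distrib]
    exact Finset.sum_congr rfl fun i _ => by ring
  rw [hAid]
  calc |∑ i, ((B.mulVec gu i - gu i) * B.mulVec gψ i + gu i * (B.mulVec gψ i - gψ i))|
      ≤ ∑ i, |(B.mulVec gu i - gu i) * B.mulVec gψ i + gu i * (B.mulVec gψ i - gψ i)| :=
        Finset.abs_sum_le_sum_abs _ _
    _ ≤ ∑ i, ((η * (a * r2)) * (β * (s * r1)) + |gu i| * (η * (s * r1))) := by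
        refine Finset.sum_le_sum fun i _ => ?_
        refine (abs_add_le _ _).trans (add_le_add ?_ ?_)
        · rw [abs_mul]
          exact mul_le_mul (hBuη i) (hBψ i) (abs_nonneg _) (by positivity)
        · rw [abs_mul]
          exact mul_le_mul_of_nonneg_left (hBψη i) (abs_nonneg _)
    _ = N * ((η * (a * r2)) * (β * (s * r1))) + (∑ i, |gu i|) * (η * (s * r1)) := by
        rw [Finset.sum_add_distrib, Finset.sum_const, Finset.sum_mul]
        simp [mul_comm, hN]
    _ ≤ N * ((η * (a * r2)) * (β * (s * r1))) + (a * r2) * (η * (s * r1)) := by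
        refine add_le_add_right (mul_le_mul_of_nonneg_right hsumu (by positivity)) _
    _ = (N * η * (1 + N * β)) * (a * s) := by
        have hid : N * ((η * (a * r2)) * (β * (s * r1))) + (a * r2) * (η * (s * r1))
            = (N * (η * β) * (a * s) + η * (a * s)) * (r1 * r2) := by ring
        rw [hid, hr12]; ring

/-- Pointwise bound for the second (Jacobian) term. -/
lemma pointwise_boundB {n : ℕ} (hn : 1 ≤ n) {p q : ℝ} (hpq : Real.HolderConjugate p q)
    (B : Matrix (Fin n) (Fin n) ℝ) (gu gJ : Fin n → ℝ) (ψx Jx : ℝ)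
    {β δ c : ℝ} (hβ : 0 ≤ β) (hδ : 0 ≤ δ) (hc : 0 < c)
    (hBβ : ∀ i j, |B i j| ≤ β) (hgJ : ∀ j, |gJ j| ≤ δ) (hJc : c ≤ Jx) :
    |(1 / Jx) * (B.mulVec gu ⬝ᵥ B.mulVec gJ) * ψx|
      ≤ ((n : ℝ) ^ 3 * β ^ 2 * δ / c) * (pNormVec n p gu * |ψx|) := by
  have hq0 : (0 : ℝ) < q := lt_trans zero_lt_one hpq.symm.lt
  set N : ℝ := (n : ℝ) with hN
  have hN1 : (1 : ℝ) ≤ N := Nat.one_le_cast.mpr hn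
  have hN0 : (0 : ℝ) < N := lt_of_lt_of_le zero_lt_one hN1
  set a := pNormVec n p gu with ha
  have ha0 : 0 ≤ a := pNormVec_nonneg n p gu
  set r2 : ℝ := N ^ (1 / q) with hr2
  have hr20 : 0 ≤ r2 := Real.rpow_nonneg hN0.le _
  have hr2N : r2 ≤ N := by
    calc r2 ≤ N ^ (1 : ℝ) :=
      Real.rpow_le_rpow_of_exponent_le hN1 ((div_le_one hq0).mpr hpq.symm.lt.le)
    _ = N := Real.rpow_one N
  have hsumu : ∑ j, |gu j| ≤ a * r2 := sum_abs_le_pNormVec hpq gu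
  have hsumJ : ∑ j, |gJ j| ≤ N * δ := by
    calc ∑ j, |gJ j| ≤ ∑ _j : Fin n, δ := Finset.sum_le_sum fun j _ => hgJ j
      _ = N * δ := by simp [mul_comm, hN]
  have hBu : ∀ i, |B.mulVec gu i| ≤ β * (a * r2) := fun i => by
    rw [_root_.mulVec_eq_sum]; exact sum_mul_bound _ _ (fun j => hBβ i j) hsumu hβ
  have hBJ : ∀ i, |B.mulVec gJ i| ≤ β * (N * δ) := fun i => by
    rw [_root_.mulVec_eq_sum]; exact sum_mul_bound _ _ (fun j => hBβ i j) hsumJ hβ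
  have hdotJ : |B.mulVec gu ⬝ᵥ B.mulVec gJ| ≤ N * ((β * (a * r2)) * (β * (N * δ))) := by
    calc |B.mulVec gu ⬝ᵥ B.mulVec gJ| ≤ ∑ i, |B.mulVec gu i * B.mulVec gJ i| := by
          rw [dotProduct]; exact Finset.abs_sum_le_sum_abs _ _
      _ ≤ ∑ _i : Fin n, (β * (a * r2)) * (β * (N * δ)) := by
          refine Finset.sum_le_sum fun i _ => ?_
          rw [abs_mul]
          exact mul_le_mul (hBu i) (hBJ i) (abs_nonneg _) (by positivity)
      _ = N * ((β * (a * r2)) * (β * (N * δ))) := by simp [mul_comm, hN]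
  have hJx : (0:ℝ) < Jx := lt_of_lt_of_le hc hJc
  have h1J : |1 / Jx| ≤ 1 / c := by
    rw [abs_of_nonneg (by positivity)]
    exact one_div_le_one_div_of_le hc hJc
  calc |(1 / Jx) * (B.mulVec gu ⬝ᵥ B.mulVec gJ) * ψx|
      = |1 / Jx| * |B.mulVec gu ⬝ᵥ B.mulVec gJ| * |ψx| := by rw [abs_mul, abs_mul]
    _ ≤ (1 / c) * (N ^ 3 * β ^ 2 * δ * a) * |ψx| := by
        refine mul_le_mul_of_nonneg_right ?_ (abs_nonneg _)
        refine mul_le_mul h1J (hdotJ.trans ?_) (abs_nonneg _) (by positivity)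
        have h1 : N * ((β * (a * r2)) * (β * (N * δ))) = (N ^ 2 * β ^ 2 * δ * a) * r2 := by
          ring
        have h2 : N ^ 3 * β ^ 2 * δ * a = (N ^ 2 * β ^ 2 * δ * a) * N := by ring
        rw [h1, h2]
        exact mul_le_mul_of_nonneg_left hr2N (by positivity)
    _ = (N ^ 3 * β ^ 2 * δ / c) * (a * |ψx|) := by ring

/-- `t ≤ (t^r + w)^{1/r}` for `t, w ≥ 0`, `r > 0`. -/
lemma le_rpow_add_right {t w r : ℝ} (ht : 0 ≤ t) (hw : 0 ≤ w) (hr : 0 < r) :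
    t ≤ (t ^ r + w) ^ (1 / r) := by
  have h1 : t = (t ^ r) ^ (1 / r) := by
    rw [one_div, Real.rpow_rpow_inv ht hr.ne']
  nth_rewrite 1 [h1]
  exact Real.rpow_le_rpow (Real.rpow_nonneg ht _) (by linarith) (by positivity)

lemma le_rpow_add_left {t w r : ℝ} (ht : 0 ≤ t) (hw : 0 ≤ w) (hr : 0 < r) :
    t ≤ (w + t ^ r) ^ (1 / r) := by
  rw [add_comm]; exact le_rpow_add_right ht hw hr

/-- The fundamental bilinear-form estimate: with `b(x) = ((Dh(x))⁻¹)ᵀ`, `J(x) = det Dh(x)`,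
and the bounds `|b_{ij}| ≤ β`, `|b_{ij} − δ_{ij}| ≤ η`, `|∂J/∂x_j| ≤ δ`, `J ≥ c` on `Ω`,
the difference between the bilinear form of the pulled-back operator and that of the
Laplacian is bounded by `(nη(1+nβ) + n³β²δ/c)·‖u‖_{W^{1,p}}·‖ψ‖_{W^{1,q}}`. -/
theorem stmt12 (n : ℕ) (Ω : Set (EuclideanSpace ℝ (Fin n))) (hΩo : IsOpen Ω)
    (hΩf : volume Ω < ⊤)
    (h : EuclideanSpace ℝ (Fin n) → EuclideanSpace ℝ (Fin n))
    (hh : ∀ x ∈ Ω, DifferentiableAt ℝ h x)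
    (hinv : ∀ x ∈ Ω, IsUnit (jacMat n h x))
    (b : EuclideanSpace ℝ (Fin n) → Matrix (Fin n) (Fin n) ℝ)
    (hb : ∀ x, b x = ((jacMat n h x)⁻¹)ᵀ)
    (J : EuclideanSpace ℝ (Fin n) → ℝ) (hJ : ∀ x, J x = (jacMat n h x).det)
    (hJd : ∀ x ∈ Ω, DifferentiableAt ℝ J x)
    (β η δ c : ℝ) (hβ : 0 < β) (hη : 0 < η) (hδ : 0 < δ) (hc : 0 < c)
    (hbβ : ∀ x ∈ Ω, ∀ i j, |b x i j| ≤ β)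
    (hbη : ∀ x ∈ Ω, ∀ i j, |b x i j - (if i = j then 1 else 0)| ≤ η)
    (hgJ : ∀ x ∈ Ω, ∀ j, |gradVec n J x j| ≤ δ)
    (hJc : ∀ x ∈ Ω, c ≤ J x)
    (p q : ℝ) (hp : 1 < p) (hq : 1 < q) (hpq : 1 / p + 1 / q = 1)
    (u ψ : EuclideanSpace ℝ (Fin n) → ℝ)
    (hud : ∀ x ∈ Ω, DifferentiableAt ℝ u x) (hψd : ∀ x ∈ Ω, DifferentiableAt ℝ ψ x)
    (hui : ∫⁻ x in Ω,
        ENNReal.ofReal (|u x| ^ p + pNormVec n p (gradVec n u x) ^ p) ∂volume < ⊤)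
    (hψi : ∫⁻ x in Ω,
        ENNReal.ofReal (|ψ x| ^ q + pNormVec n q (gradVec n ψ x) ^ q) ∂volume < ⊤) :
    |(∫ x in Ω, ((b x).mulVec (gradVec n u x) ⬝ᵥ (b x).mulVec (gradVec n ψ x)
          - gradVec n u x ⬝ᵥ gradVec n ψ x) ∂volume)
        + ∫ x in Ω, (1 / J x) *
            ((b x).mulVec (gradVec n u x) ⬝ᵥ (b x).mulVec (gradVec n J x)) * ψ x ∂volume|
      ≤ ((n : ℝ) * η * (1 + n * β) + n ^ 3 * β ^ 2 * δ / c)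
          * (∫ x in Ω, (|u x| ^ p + pNormVec n p (gradVec n u x) ^ p) ∂volume) ^ (1 / p)
          * (∫ x in Ω, (|ψ x| ^ q + pNormVec n q (gradVec n ψ x) ^ q) ∂volume) ^ (1 / q) := by
  -- trivial case `n = 0`
  rcases Nat.eq_zero_or_pos n with hn0 | hn1
  · subst hn0
    simp [dotProduct]
  -- main case
  have hp0 : (0 : ℝ) < p := lt_trans zero_lt_one hp
  have hq0 : (0 : ℝ) < q := lt_trans zero_lt_one hq
  have conj : p.HolderConjugate q := Real.holderConjugate_iff.mpr ⟨hp, by simpa [one_div] using hpq⟩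
  set μ := volume.restrict Ω with hμd
  -- abbreviations
  set A : EuclideanSpace ℝ (Fin n) → ℝ := fun x =>
    (b x).mulVec (gradVec n u x) ⬝ᵥ (b x).mulVec (gradVec n ψ x)
      - gradVec n u x ⬝ᵥ gradVec n ψ x with hA
  set Bf : EuclideanSpace ℝ (Fin n) → ℝ := fun x =>
    (1 / J x) * ((b x).mulVec (gradVec n u x) ⬝ᵥ (b x).mulVec (gradVec n J x)) * ψ x with hBf
  set F : EuclideanSpace ℝ (Fin n) → ℝ := fun x =>
    (|u x| ^ p + pNormVec n p (gradVec n u x) ^ p) ^ (1 / p) with hF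
  set G : EuclideanSpace ℝ (Fin n) → ℝ := fun x =>
    (|ψ x| ^ q + pNormVec n q (gradVec n ψ x) ^ q) ^ (1 / q) with hG
  set K1 : ℝ := (n : ℝ) * η * (1 + n * β) with hK1
  set K2 : ℝ := (n : ℝ) ^ 3 * β ^ 2 * δ / c with hK2
  have hn0R : (0 : ℝ) ≤ (n : ℝ) := Nat.cast_nonneg n
  have hK10 : 0 ≤ K1 :=
    mul_nonneg (mul_nonneg hn0R hη.le)
      (add_nonneg zero_le_one (mul_nonneg hn0R hβ.le))
  have hK20 : 0 ≤ K2 := by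
    apply div_nonneg _ hc.le
    exact mul_nonneg (mul_nonneg (pow_nonneg hn0R 3) (pow_nonneg hβ.le 2)) hδ.le
  -- nonnegativity of the inner expressions
  have hinneru : ∀ x, 0 ≤ |u x| ^ p + pNormVec n p (gradVec n u x) ^ p := fun x =>
    add_nonneg (Real.rpow_nonneg (abs_nonneg _) _)
      (Real.rpow_nonneg (pNormVec_nonneg _ _ _) _)
  have hinnerψ : ∀ x, 0 ≤ |ψ x| ^ q + pNormVec n q (gradVec n ψ x) ^ q := fun x =>
    add_nonneg (Real.rpow_nonneg (abs_nonneg _) _)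
      (Real.rpow_nonneg (pNormVec_nonneg _ _ _) _)
  have hF0 : ∀ x, 0 ≤ F x := fun x => Real.rpow_nonneg (hinneru x) _
  have hG0 : ∀ x, 0 ≤ G x := fun x => Real.rpow_nonneg (hinnerψ x) _
  have hSuF : ∀ x, pNormVec n p (gradVec n u x) ≤ F x := fun x =>
    le_rpow_add_left (pNormVec_nonneg _ _ _) (Real.rpow_nonneg (abs_nonneg _) _) hp0
  have hSψG : ∀ x, pNormVec n q (gradVec n ψ x) ≤ G x := fun x =>
    le_rpow_add_left (pNormVec_nonneg _ _ _) (Real.rpow_nonneg (abs_nonneg _) _) hq0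
  have hψG : ∀ x, |ψ x| ≤ G x := fun x =>
    le_rpow_add_right (abs_nonneg _) (Real.rpow_nonneg (pNormVec_nonneg _ _ _) _) hq0
  -- measurability
  have mb : ∀ i j, Measurable fun x => b x i j := fun i j => by
    have hbe : (fun x => b x i j) = fun x => ((jacMat n h x)⁻¹)ᵀ i j :=
      funext fun x => by rw [hb x]
    rw [hbe]; exact measurable_binv n h i j
  have mJ : Measurable J := by
    have hJe : J = fun x => (jacMat n h x).det := funext hJ
    rw [hJe]; exact measurable_detJ n h
  have mgu : ∀ j, Measurable fun x => gradVec n u x j := measurable_gradVec n u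
  have mgψ : ∀ j, Measurable fun x => gradVec n ψ x j := measurable_gradVec n ψ
  have mgJ : ∀ j, Measurable fun x => gradVec n J x j := measurable_gradVec n J
  have mBu : ∀ i, Measurable fun x => (b x).mulVec (gradVec n u x) i := fun i => by
    simp only [_root_.mulVec_eq_sum]
    exact Finset.measurable_sum _ fun j _ => (mb i j).mul (mgu j)
  have mBψ : ∀ i, Measurable fun x => (b x).mulVec (gradVec n ψ x) i := fun i => by
    simp only [_root_.mulVec_eq_sum]
    exact Finset.measurable_sum _ fun j _ => (mb i j).mul (mgψ j)
  have mBJ : ∀ i, Measurable fun x => (b x).mulVec (gradVec n J x) i := fun i => by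
    simp only [_root_.mulVec_eq_sum]
    exact Finset.measurable_sum _ fun j _ => (mb i j).mul (mgJ j)
  have mA : Measurable A := by
    rw [hA]
    apply Measurable.sub
    · simp only [dotProduct]
      exact Finset.measurable_sum _ fun i _ => (mBu i).mul (mBψ i)
    · simp only [dotProduct]
      exact Finset.measurable_sum _ fun i _ => (mgu i).mul (mgψ i)
  have mu : AEMeasurable u μ :=
    ContinuousOn.aemeasurable
      (fun x hx => (hud x hx).continuousAt.continuousWithinAt) hΩo.measurableSet
  have mψ : AEMeasurable ψ μ :=
    ContinuousOn.aemeasurable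
      (fun x hx => (hψd x hx).continuousAt.continuousWithinAt) hΩo.measurableSet
  have mB : AEMeasurable Bf μ := by
    rw [hBf]
    refine AEMeasurable.mul (Measurable.aemeasurable ?_) mψ
    refine Measurable.mul (measurable_const.div mJ) ?_
    simp only [dotProduct]
    exact Finset.measurable_sum _ fun i _ => (mBu i).mul (mBJ i)
  have mSu : Measurable fun x => pNormVec n p (gradVec n u x) := by
    simp only [pNormVec]
    refine (Real.continuous_rpow_const (by positivity)).measurable.comp ?_
    exact Finset.measurable_sum _ fun i _ =>
      (Real.continuous_rpow_const hp0.le).measurable.comp (mgu i).abs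
  have mSψ : Measurable fun x => pNormVec n q (gradVec n ψ x) := by
    simp only [pNormVec]
    refine (Real.continuous_rpow_const (by positivity)).measurable.comp ?_
    exact Finset.measurable_sum _ fun i _ =>
      (Real.continuous_rpow_const hq0.le).measurable.comp (mgψ i).abs
  have mF : AEMeasurable F μ := by
    rw [hF]
    refine (Real.continuous_rpow_const (by positivity)).measurable.comp_aemeasurable ?_
    exact AEMeasurable.add
      (((Real.continuous_rpow_const hp0.le).comp continuous_abs).measurable.comp_aemeasurable mu)
      ((Real.continuous_rpow_const hp0.le).measurable.comp mSu).aemeasurable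
  have mG : AEMeasurable G μ := by
    rw [hG]
    refine (Real.continuous_rpow_const (by positivity)).measurable.comp_aemeasurable ?_
    exact AEMeasurable.add
      (((Real.continuous_rpow_const hq0.le).comp continuous_abs).measurable.comp_aemeasurable mψ)
      ((Real.continuous_rpow_const hq0.le).measurable.comp mSψ).aemeasurable
  -- MemLp facts
  have hFp : ∀ x, F x ^ p = |u x| ^ p + pNormVec n p (gradVec n u x) ^ p := fun x => by
    rw [hF, one_div, Real.rpow_inv_rpow (hinneru x) hp0.ne']
  have hGq : ∀ x, G x ^ q = |ψ x| ^ q + pNormVec n q (gradVec n ψ x) ^ q := fun x => by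
    rw [hG, one_div, Real.rpow_inv_rpow (hinnerψ x) hq0.ne']
  have hFmem : MemLp F (ENNReal.ofReal p) μ := by
    refine ⟨mF.aestronglyMeasurable, ?_⟩
    rw [eLpNorm_eq_lintegral_rpow_enorm_toReal (ENNReal.ofReal_pos.mpr hp0).ne' ENNReal.ofReal_ne_top,
      ENNReal.toReal_ofReal hp0.le]
    have hpt : ∫⁻ x, ‖F x‖ₑ ^ p ∂μ
        = ∫⁻ x, ENNReal.ofReal (|u x| ^ p + pNormVec n p (gradVec n u x) ^ p) ∂μ := by
      refine lintegral_congr fun x => ?_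
      rw [Real.enorm_eq_ofReal (hF0 x), ENNReal.ofReal_rpow_of_nonneg (hF0 x) hp0.le, hFp x]
    rw [hpt]
    exact ENNReal.rpow_lt_top_of_nonneg (by positivity) hui.ne
  have hGmem : MemLp G (ENNReal.ofReal q) μ := by
    refine ⟨mG.aestronglyMeasurable, ?_⟩
    rw [eLpNorm_eq_lintegral_rpow_enorm_toReal (ENNReal.ofReal_pos.mpr hq0).ne' ENNReal.ofReal_ne_top,
      ENNReal.toReal_ofReal hq0.le]
    have hpt : ∫⁻ x, ‖G x‖ₑ ^ q ∂μ
        = ∫⁻ x, ENNReal.ofReal (|ψ x| ^ q + pNormVec n q (gradVec n ψ x) ^ q) ∂μ := by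
      refine lintegral_congr fun x => ?_
      rw [Real.enorm_eq_ofReal (hG0 x), ENNReal.ofReal_rpow_of_nonneg (hG0 x) hq0.le, hGq x]
    rw [hpt]
    exact ENNReal.rpow_lt_top_of_nonneg (by positivity) hψi.ne
  -- integrability of F * G via Hoelder
  have hconj1 : (1 : ℝ≥0∞) / 1 = 1 / ENNReal.ofReal q + 1 / ENNReal.ofReal p := by
    simp only [one_div]
    rw [← ENNReal.ofReal_inv_of_pos hq0, ← ENNReal.ofReal_inv_of_pos hp0,
      ← ENNReal.ofReal_add (by positivity) (by positivity), inv_one, ← ENNReal.ofReal_one]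
    congr 1
    have := hpq
    rw [one_div, one_div] at this
    linarith
  have hFG : Integrable (fun x => F x * G x) μ := by
    have hsmul : MemLp (G • F) 1 μ := by
        haveI : ENNReal.HolderTriple (ENNReal.ofReal q) (ENNReal.ofReal p) 1 :=
          ⟨by simpa [one_div] using hconj1.symm⟩
        exact hFmem.smul hGmem
    have hint := memLp_one_iff_integrable.mp hsmul
    have : (fun x => F x * G x) = G • F := funext fun x => by
      simp [Pi.smul_apply, smul_eq_mul, mul_comm]
    rw [this]; exact hint
  -- a.e. bounds
  have hboundA : ∀ᵐ x ∂μ, ‖A x‖ ≤ K1 * (F x * G x) := by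
    filter_upwards [ae_restrict_mem hΩo.measurableSet] with x hx
    rw [Real.norm_eq_abs]
    refine (pointwise_boundA hn1 conj (b x) (gradVec n u x) (gradVec n ψ x)
      hβ.le hη.le (hbβ x hx) (hbη x hx)).trans ?_
    refine mul_le_mul_of_nonneg_left ?_ hK10
    exact mul_le_mul (hSuF x) (hSψG x) (pNormVec_nonneg _ _ _) (hF0 x)
  have hboundB : ∀ᵐ x ∂μ, ‖Bf x‖ ≤ K2 * (F x * G x) := by
    filter_upwards [ae_restrict_mem hΩo.measurableSet] with x hx
    rw [Real.norm_eq_abs]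
    refine (pointwise_boundB hn1 conj (b x) (gradVec n u x) (gradVec n J x) (ψ x) (J x)
      hβ.le hδ.le hc (hbβ x hx) (hgJ x hx) (hJc x hx)).trans ?_
    refine mul_le_mul_of_nonneg_left ?_ hK20
    exact mul_le_mul (hSuF x) (hψG x) (abs_nonneg _) (hF0 x)
  have hAint : Integrable A μ :=
    Integrable.mono' (hFG.const_mul K1) mA.aestronglyMeasurable hboundA
  have hBint : Integrable Bf μ :=
    Integrable.mono' (hFG.const_mul K2) mB.aestronglyMeasurable hboundB
  -- final chain
  rw [← integral_add hAint hBint]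
  have hHolder : ∫ x, F x * G x ∂μ
      ≤ (∫ x, F x ^ p ∂μ) ^ (1 / p) * (∫ x, G x ^ q ∂μ) ^ (1 / q) :=
    integral_mul_le_Lp_mul_Lq_of_nonneg conj (Filter.Eventually.of_forall hF0)
      (Filter.Eventually.of_forall hG0) hFmem hGmem
  have hFpint : ∫ x, F x ^ p ∂μ
      = ∫ x, (|u x| ^ p + pNormVec n p (gradVec n u x) ^ p) ∂μ :=
    integral_congr_ae (Filter.Eventually.of_forall fun x => hFp x)
  have hGqint : ∫ x, G x ^ q ∂μ
      = ∫ x, (|ψ x| ^ q + pNormVec n q (gradVec n ψ x) ^ q) ∂μ :=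
    integral_congr_ae (Filter.Eventually.of_forall fun x => hGq x)
  calc |∫ x, (A x + Bf x) ∂μ|
      ≤ ∫ x, |A x + Bf x| ∂μ := by
        simpa [Real.norm_eq_abs] using
          norm_integral_le_integral_norm (μ := μ) (fun x => A x + Bf x)
    _ ≤ ∫ x, (K1 + K2) * (F x * G x) ∂μ := by
        refine integral_mono_ae (hAint.add hBint).abs (hFG.const_mul _) ?_
        filter_upwards [hboundA, hboundB] with x h1 h2
        rw [Real.norm_eq_abs] at h1 h2
        calc |A x + Bf x| ≤ |A x| + |Bf x| := abs_add_le _ _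
          _ ≤ K1 * (F x * G x) + K2 * (F x * G x) := add_le_add h1 h2
          _ = (K1 + K2) * (F x * G x) := by ring
    _ = (K1 + K2) * ∫ x, F x * G x ∂μ := integral_const_mul _ _
    _ ≤ (K1 + K2) * ((∫ x, F x ^ p ∂μ) ^ (1 / p) * (∫ x, G x ^ q ∂μ) ^ (1 / q)) :=
        mul_le_mul_of_nonneg_left hHolder (by linarith)
    _ = (K1 + K2)
          * (∫ x, (|u x| ^ p + pNormVec n p (gradVec n u x) ^ p) ∂μ) ^ (1 / p)
          * (∫ x, (|ψ x| ^ q + pNormVec n q (gradVec n ψ x) ^ q) ∂μ) ^ (1 / q) := by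
        rw [hFpint, hGqint, mul_assoc]
end

section
/- Let (Ω, μ) be a finite measure space, 1 ≤ p < ∞, let f : ℝ → ℝ be continuously differentiable with bounded derivative, and let u : Ω → ℝ be a bounded measurable function. For a bounded measurable w : Ω → ℝ define the remainder r(w)(x) = f(u(x) + w(x)) − f(u(x)) − f′(u(x)) w(x). Then there exists a nondecreasing function k : (0, ∞) → [0, ∞) with k(ρ) → 0 as ρ → 0⁺ such that for all ρ > 0 and all bounded measurable w₁, w₂ with sup_Ω |w₁| ≤ ρ and sup_Ω |w₂| ≤ ρ, one has ( ∫_Ω |r(w₁) − r(w₂)|^p dμ )^{1/p} ≤ k(ρ) · ( ∫_Ω |w₁ − w₂|^p dμ )^{1/p}. -/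
open Filter Topology MeasureTheory

/-- Uniform smallness of the nonlinear remainder: on a finite measure space, if `f` is `C¹`
with `|f′| ≤ M`, `u` is bounded measurable, and
`r(w)(x) = f(u(x)+w(x)) − f(u(x)) − f′(u(x))w(x)`, then there is a nondecreasing function
`k` on `(0,∞)` with `k(ρ) → 0` as `ρ → 0⁺` such that
`‖r(w₁) − r(w₂)‖_{L^p} ≤ k(ρ)·‖w₁ − w₂‖_{L^p}` whenever `sup|w₁| ≤ ρ` and `sup|w₂| ≤ ρ`. -/
theorem stmt15 {Ω : Type*} [MeasurableSpace Ω] (μ : Measure Ω) [IsFiniteMeasure μ]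
    (p : ℝ) (hp : 1 ≤ p)
    (f : ℝ → ℝ) (hf : ContDiff ℝ 1 f)
    (M : ℝ) (hM : ∀ s : ℝ, |deriv f s| ≤ M)
    (u : Ω → ℝ) (hu : Measurable u) (C : ℝ) (huC : ∀ x, |u x| ≤ C)
    (r : (Ω → ℝ) → Ω → ℝ)
    (hr : ∀ w x, r w x = f (u x + w x) - f (u x) - deriv f (u x) * w x) :
    ∃ k : ℝ → ℝ, (∀ ρ : ℝ, 0 < ρ → 0 ≤ k ρ) ∧ MonotoneOn k (Set.Ioi 0) ∧
      Tendsto k (𝓝[>] 0) (𝓝 0) ∧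
      ∀ ρ : ℝ, 0 < ρ → ∀ w₁ w₂ : Ω → ℝ, Measurable w₁ → Measurable w₂ →
        (∀ x, |w₁ x| ≤ ρ) → (∀ x, |w₂ x| ≤ ρ) →
        (∫ x, |r w₁ x - r w₂ x| ^ p ∂μ) ^ (1 / p)
          ≤ k ρ * (∫ x, |w₁ x - w₂ x| ^ p ∂μ) ^ (1 / p) := by
  have hp0 : (0:ℝ) < p := lt_of_lt_of_le one_pos hp
  have hdf : Differentiable ℝ f := hf.differentiable one_ne_zero
  have hdfc : Continuous (deriv f) := hf.continuous_deriv le_rfl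
  -- the set of oscillations
  set D : ℝ → Set ℝ := fun ρ =>
    {d | ∃ a s : ℝ, |a| ≤ C ∧ |s| ≤ ρ ∧ d = |deriv f (a + s) - deriv f a|} with hD
  have hDnonneg : ∀ ρ, ∀ d ∈ D ρ, 0 ≤ d := by
    rintro ρ d ⟨a, s, _, _, rfl⟩; exact abs_nonneg _
  have hDbdd : ∀ ρ, BddAbove (D ρ) := by
    intro ρ
    refine ⟨2 * M, ?_⟩
    rintro d ⟨a, s, _, _, rfl⟩
    calc |deriv f (a + s) - deriv f a| ≤ |deriv f (a + s)| + |deriv f a| := abs_sub _ _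
      _ ≤ M + M := add_le_add (hM _) (hM _)
      _ = 2 * M := by ring
  set k : ℝ → ℝ := fun ρ => sSup (D ρ) with hk
  have hknonneg : ∀ ρ, 0 ≤ k ρ := fun ρ => Real.sSup_nonneg fun d hd => hDnonneg ρ d hd
  have hkmem : ∀ ρ, ∀ d ∈ D ρ, d ≤ k ρ := fun ρ d hd => le_csSup (hDbdd ρ) hd
  refine ⟨k, fun ρ _ => hknonneg ρ, ?_, ?_, ?_⟩
  · -- monotone
    intro ρ₁ _ ρ₂ _ h12
    rcases Set.eq_empty_or_nonempty (D ρ₁) with he | hne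
    · simp [hk, he, Real.sSup_empty, hknonneg ρ₂]; exact hknonneg ρ₂
    · refine csSup_le_csSup (hDbdd ρ₂) hne ?_
      rintro d ⟨a, s, ha, hs, rfl⟩
      exact ⟨a, s, ha, hs.trans h12, rfl⟩
  · -- tendsto 0
    rw [Metric.tendsto_nhdsWithin_nhds]
    intro ε hε
    have hK : IsCompact (Set.Icc (-(|C| + 1)) (|C| + 1)) := isCompact_Icc
    have huc := hK.uniformContinuousOn_of_continuous hdfc.continuousOn
    rw [Metric.uniformContinuousOn_iff] at huc
    obtain ⟨δ, hδ, hδ'⟩ := huc (ε / 2) (half_pos hε)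
    refine ⟨min δ 1, lt_min hδ one_pos, fun ρ hρ hρδ => ?_⟩
    rw [Real.dist_eq, sub_zero] at hρδ ⊢
    rw [abs_of_nonneg (hknonneg ρ)]
    rw [abs_of_pos hρ] at hρδ
    have hkle : k ρ ≤ ε / 2 := by
      refine Real.sSup_le ?_ (le_of_lt (half_pos hε))
      rintro d ⟨a, s, ha, hs, rfl⟩
      have haC : |a| ≤ |C| := ha.trans (le_abs_self C)
      have h1 : a + s ∈ Set.Icc (-(|C| + 1)) (|C| + 1) := by
        have : |a + s| ≤ |C| + 1 := by
          calc |a + s| ≤ |a| + |s| := abs_add_le _ _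
            _ ≤ |C| + 1 := add_le_add haC (hs.trans ((lt_min_iff.mp hρδ).2.le))
        constructor <;> [linarith [neg_abs_le (a + s)]; linarith [le_abs_self (a + s)]]
      have h2 : a ∈ Set.Icc (-(|C| + 1)) (|C| + 1) := by
        constructor <;> [nlinarith [neg_abs_le a]; nlinarith [le_abs_self a]]
      have hd : dist (a + s) a < δ := by
        rw [Real.dist_eq, add_sub_cancel_left]
        exact lt_of_le_of_lt hs (lt_of_lt_of_le hρδ (min_le_left _ _))
      have hlt := hδ' _ h1 _ h2 hd
      rw [Real.dist_eq] at hlt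
      exact hlt.le
    linarith
  · -- main estimate
    intro ρ hρ w₁ w₂ hw₁ hw₂ hw₁ρ hw₂ρ
    -- pointwise bound
    have key : ∀ x, |r w₁ x - r w₂ x| ≤ k ρ * |w₁ x - w₂ x| := by
      intro x
      set g : ℝ → ℝ := fun y => f y - deriv f (u x) * y with hg
      have hgd : ∀ y, DifferentiableAt ℝ g y := fun y =>
        (hdf y).sub ((differentiableAt_id.const_mul _))
      have hgderiv : ∀ y, deriv g y = deriv f y - deriv f (u x) := by
        intro y
        have hder : HasDerivAt g (deriv f y - deriv f (u x) * 1) y :=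
          (hdf y).hasDerivAt.sub ((hasDerivAt_id y).const_mul (deriv f (u x)))
        simpa using hder.deriv
      have hs : Convex ℝ (Set.Icc (u x - ρ) (u x + ρ)) := convex_Icc _ _
      have bound : ∀ y ∈ Set.Icc (u x - ρ) (u x + ρ), ‖deriv g y‖ ≤ k ρ := by
        intro y hy
        rw [hgderiv, Real.norm_eq_abs]
        refine hkmem ρ _ ⟨u x, y - u x, huC x, ?_, by rw [add_sub_cancel]⟩
        rw [abs_le]; constructor <;> [linarith [hy.1]; linarith [hy.2]]
      have mem₁ : u x + w₁ x ∈ Set.Icc (u x - ρ) (u x + ρ) := by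
        have := abs_le.mp (hw₁ρ x); constructor <;> linarith [this.1, this.2]
      have mem₂ : u x + w₂ x ∈ Set.Icc (u x - ρ) (u x + ρ) := by
        have := abs_le.mp (hw₂ρ x); constructor <;> linarith [this.1, this.2]
      have := hs.norm_image_sub_le_of_norm_deriv_le (fun y _ => hgd y) bound mem₂ mem₁
      rw [Real.norm_eq_abs, Real.norm_eq_abs] at this
      have e1 : g (u x + w₁ x) - g (u x + w₂ x) = r w₁ x - r w₂ x := by
        rw [hr, hr, hg]; ring
      have e2 : u x + w₁ x - (u x + w₂ x) = w₁ x - w₂ x := by ring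
      rwa [e1, e2] at this
    -- measurability
    have hmr : ∀ (w : Ω → ℝ), Measurable w → Measurable (r w) := by
      intro w hw
      have : r w = fun x => f (u x + w x) - f (u x) - deriv f (u x) * w x :=
        funext fun x => hr w x
      rw [this]
      exact ((hf.continuous.measurable.comp (hu.add hw)).sub
        (hf.continuous.measurable.comp hu)).sub ((hdfc.measurable.comp hu).mul hw)
    have hmr₁ := hmr w₁ hw₁
    have hmr₂ := hmr w₂ hw₂
    have hmΔw : Measurable fun x => |w₁ x - w₂ x| ^ p :=
      ((hw₁.sub hw₂).abs).pow_const p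
    have hmΔr : Measurable fun x => |r w₁ x - r w₂ x| ^ p :=
      ((hmr₁.sub hmr₂).abs).pow_const p
    -- integrability
    have hbΔw : ∀ x, |w₁ x - w₂ x| ≤ 2 * ρ := by
      intro x
      calc |w₁ x - w₂ x| ≤ |w₁ x| + |w₂ x| := abs_sub _ _
        _ ≤ 2 * ρ := by linarith [hw₁ρ x, hw₂ρ x]
    have hintΔw : Integrable (fun x => |w₁ x - w₂ x| ^ p) μ := by
      refine (integrable_const ((2 * ρ) ^ p)).mono' hmΔw.aestronglyMeasurable
        (Filter.Eventually.of_forall fun x => ?_)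
      rw [Real.norm_eq_abs, abs_of_nonneg (Real.rpow_nonneg (abs_nonneg _) p)]
      exact Real.rpow_le_rpow (abs_nonneg _) (hbΔw x) (le_of_lt hp0)
    have hintΔr : Integrable (fun x => |r w₁ x - r w₂ x| ^ p) μ := by
      refine (integrable_const ((k ρ * (2 * ρ)) ^ p)).mono' hmΔr.aestronglyMeasurable
        (Filter.Eventually.of_forall fun x => ?_)
      rw [Real.norm_eq_abs, abs_of_nonneg (Real.rpow_nonneg (abs_nonneg _) p)]
      refine Real.rpow_le_rpow (abs_nonneg _) ((key x).trans ?_) (le_of_lt hp0)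
      exact mul_le_mul_of_nonneg_left (hbΔw x) (hknonneg ρ)
    -- integral comparison
    have hint_le : (∫ x, |r w₁ x - r w₂ x| ^ p ∂μ)
        ≤ k ρ ^ p * ∫ x, |w₁ x - w₂ x| ^ p ∂μ := by
      rw [← integral_const_mul]
      refine integral_mono hintΔr (hintΔw.const_mul _) fun x => ?_
      calc |r w₁ x - r w₂ x| ^ p ≤ (k ρ * |w₁ x - w₂ x|) ^ p :=
            Real.rpow_le_rpow (abs_nonneg _) (key x) (le_of_lt hp0)
        _ = k ρ ^ p * |w₁ x - w₂ x| ^ p :=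
            Real.mul_rpow (hknonneg ρ) (abs_nonneg _)
    have h1 : (0:ℝ) ≤ ∫ x, |r w₁ x - r w₂ x| ^ p ∂μ :=
      integral_nonneg fun x => Real.rpow_nonneg (abs_nonneg _) p
    have h2 : (0:ℝ) ≤ ∫ x, |w₁ x - w₂ x| ^ p ∂μ :=
      integral_nonneg fun x => Real.rpow_nonneg (abs_nonneg _) p
    calc (∫ x, |r w₁ x - r w₂ x| ^ p ∂μ) ^ (1 / p)
        ≤ (k ρ ^ p * ∫ x, |w₁ x - w₂ x| ^ p ∂μ) ^ (1 / p) :=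
          Real.rpow_le_rpow h1 hint_le (by positivity)
      _ = (k ρ ^ p) ^ (1 / p) * (∫ x, |w₁ x - w₂ x| ^ p ∂μ) ^ (1 / p) :=
          Real.mul_rpow (Real.rpow_nonneg (hknonneg ρ) p) h2
      _ = k ρ * (∫ x, |w₁ x - w₂ x| ^ p ∂μ) ^ (1 / p) := by
          rw [← Real.rpow_mul (hknonneg ρ), mul_one_div_cancel (ne_of_gt hp0),
            Real.rpow_one]
end
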